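/- arXiv:1101.2481 — 2 statements merged into one kernel-verified Lean document; each statement's English description precedes it below -/
import Mathlib

section
/- Let X_i, i ≥ 1, be sampled from the Zipf–Poisson ensemble with parameter α > 1 and let A = α²(α+2)/4. Let n = n(N) be a function of N taking integer values n(N) ≥ 2 such that n(N) ≤ (A N / log N)^{1/(α+2)} holds for all large enough N. Then lim_{N→∞} Pr(X_1 > X_2 > … > X_{n(N)}) = 1. -/
open MeasureTheory ProbabilityTheory Filter

/-- The Zipf–Poisson ensemble with parameters `α > 1`, `N > 0`: the random variables
`X i`, for integers `i ≥ 1`, are independent and `X i ~ Poisson(N * i^(-α))`. -/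
def IsZipfPoisson {Ω : Type*} [MeasurableSpace Ω] (P : Measure Ω)
    (X : ℕ → Ω → ℕ) (α N : ℝ) : Prop :=
  iIndepFun (fun i : {i : ℕ // 1 ≤ i} => X i) P ∧
  ∀ i : ℕ, 1 ≤ i → ∀ k : ℕ,
    P {ω | X i ω = k} =
      ENNReal.ofReal (Real.exp (-(N * (i : ℝ) ^ (-α))) * (N * (i : ℝ) ^ (-α)) ^ k /
        (Nat.factorial k))

/-!
For `X ~ Poisson(l)` and an independent `Y ~ Poisson(m)` with `m ≤ l`, a Chernoff-type
comparison gives `P(X ≤ Y) ≤ exp (-(√l - √m)²)`. For neighbours of the ensemble,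
`l = N i^(-α)` and `m = N (i+1)^(-α)`, the mean value theorem bounds `(√l - √m)²` below by
`N α²/4 (i+1)^(-(α+2))`, which is at least `log N / (α+2)` as long as
`i + 1 ≤ n ≤ (A N / log N)^(1/(α+2))`. Each of the `n - 1` neighbouring inversions thus has
probability at most `N^(-1/(α+2))`, and the union bound gives
`P(not ordered) ≤ n N^(-1/(α+2)) ≤ (A / log N)^(1/(α+2)) → 0`.
-/

open Real

lemma tsum_ofReal_pow_div_factorial {x : ℝ} (hx : 0 ≤ x) :
    ∑' k : ℕ, ENNReal.ofReal (x ^ k / k.factorial) = ENNReal.ofReal (exp x) := by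
  rw [← ENNReal.ofReal_tsum_of_nonneg (fun k => by positivity) (summable_pow_div_factorial x),
    exp_eq_exp_ℝ, NormedSpace.exp_eq_tsum_div]

lemma pow_mul_pow_le_sqrt_mul_pow {l m : ℝ} (hm : 0 ≤ m) (hml : m ≤ l) {a b : ℕ} (hab : a ≤ b) :
    l ^ a * m ^ b ≤ √(l * m) ^ a * √(l * m) ^ b := by
  obtain ⟨k, rfl⟩ := Nat.exists_eq_add_of_le hab
  have hlm : 0 ≤ l * m := mul_nonneg (hm.trans hml) hm
  have hm_le : m ≤ √(l * m) := le_sqrt_of_sq_le (by nlinarith)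
  calc l ^ a * m ^ (a + k) = (l * m) ^ a * m ^ k := by ring
    _ ≤ (l * m) ^ a * √(l * m) ^ k := by gcongr
    _ = (√(l * m) ^ 2) ^ a * √(l * m) ^ k := by rw [sq_sqrt hlm]
    _ = √(l * m) ^ a * √(l * m) ^ (a + k) := by ring

lemma poisson_mul_poisson_le {l m : ℝ} (hm : 0 ≤ m) (hml : m ≤ l) {a b : ℕ} (hab : a ≤ b) :
    exp (-l) * l ^ a / a.factorial * (exp (-m) * m ^ b / b.factorial) ≤
      exp (-(l + m)) * (√(l * m) ^ a / a.factorial) * (√(l * m) ^ b / b.factorial) := by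
  have key := pow_mul_pow_le_sqrt_mul_pow hm hml hab
  calc exp (-l) * l ^ a / a.factorial * (exp (-m) * m ^ b / b.factorial)
      = exp (-(l + m)) * (l ^ a * m ^ b) / (a.factorial * b.factorial) := by
        rw [neg_add, exp_add]; ring
    _ ≤ exp (-(l + m)) * (√(l * m) ^ a * √(l * m) ^ b) / (a.factorial * b.factorial) := by
        gcongr
    _ = _ := by ring

/- For `a ≤ b` the term `P(X = a) P(Y = b)` is at most `e^{-(l+m)} x^a/a! x^b/b!` with
`x = √(lm)`, and the sum of these over all pairs is `e^{-(l+m)+2x} = e^{-(√l-√m)²}`. -/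
theorem measure_setOf_le_le_exp_of_poisson {Ω : Type*} [MeasurableSpace Ω] {P : Measure Ω}
    {X Y : Ω → ℕ} {l m : ℝ} (hm : 0 ≤ m) (hml : m ≤ l) (hind : IndepFun X Y P)
    (hX : ∀ k : ℕ, P {ω | X ω = k} = ENNReal.ofReal (exp (-l) * l ^ k / k.factorial))
    (hY : ∀ k : ℕ, P {ω | Y ω = k} = ENNReal.ofReal (exp (-m) * m ^ k / k.factorial)) :
    P {ω | X ω ≤ Y ω} ≤ ENNReal.ofReal (exp (-(√l - √m) ^ 2)) := by
  set x := √(l * m)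
  have hl : 0 ≤ l := hm.trans hml
  set T : ℕ × ℕ → Set Ω := fun p => {ω | X ω = p.1 ∧ Y ω = p.2 ∧ p.1 ≤ p.2}
  have hcover : {ω | X ω ≤ Y ω} ⊆ ⋃ p, T p := fun ω hω =>
    Set.mem_iUnion.2 ⟨(X ω, Y ω), rfl, rfl, hω⟩
  have hT : ∀ p : ℕ × ℕ, P (T p) ≤ ENNReal.ofReal (exp (-(l + m))) *
      ENNReal.ofReal (x ^ p.1 / p.1.factorial) * ENNReal.ofReal (x ^ p.2 / p.2.factorial) := by
    rintro ⟨a, b⟩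
    by_cases hab : a ≤ b
    · have hTab : T (a, b) = X ⁻¹' {a} ∩ Y ⁻¹' {b} := by ext; simp [T, hab]
      rw [hTab, hind.measure_inter_preimage_eq_mul _ _ (measurableSet_singleton a)
        (measurableSet_singleton b)]
      simp only [Set.preimage, Set.mem_singleton_iff]
      rw [hX, hY, ← ENNReal.ofReal_mul (by positivity), ← ENNReal.ofReal_mul (by positivity),
        ← ENNReal.ofReal_mul (by positivity)]
      exact ENNReal.ofReal_le_ofReal (poisson_mul_poisson_le hm hml hab)
    · have hTab : T (a, b) = ∅ := by ext; simp [T, hab]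
      simp [hTab]
  have hexponent : -(l + m) + x + x = -(√l - √m) ^ 2 := by
    have hx : x = √l * √m := sqrt_mul hl m
    linear_combination 2 * hx + sq_sqrt hl + sq_sqrt hm
  have hx0 : 0 ≤ x := sqrt_nonneg _
  calc P {ω | X ω ≤ Y ω} ≤ ∑' p, P (T p) := (measure_mono hcover).trans (measure_iUnion_le _)
    _ ≤ ∑' p : ℕ × ℕ, ENNReal.ofReal (exp (-(l + m))) * ENNReal.ofReal (x ^ p.1 / p.1.factorial)
          * ENNReal.ofReal (x ^ p.2 / p.2.factorial) := ENNReal.tsum_le_tsum hT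
    _ = ENNReal.ofReal (exp (-(l + m))) * ENNReal.ofReal (exp x) * ENNReal.ofReal (exp x) := by
        simp only [ENNReal.tsum_prod', ENNReal.tsum_mul_left, ENNReal.tsum_mul_right,
          tsum_ofReal_pow_div_factorial hx0]
    _ = ENNReal.ofReal (exp (-(√l - √m) ^ 2)) := by
        rw [← ENNReal.ofReal_mul (by positivity), ← ENNReal.ofReal_mul (by positivity),
          ← exp_add, ← exp_add, hexponent]

lemma mul_rpow_neg_sub_one_le_rpow_neg_sub {β x : ℝ} (hβ : 0 < β) (hx : 0 < x) :
    β * (x + 1) ^ (-β - 1) ≤ x ^ (-β) - (x + 1) ^ (-β) := by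
  obtain ⟨c, ⟨hxc, hc1⟩, hslope⟩ := exists_hasDerivAt_eq_slope (fun y => y ^ (-β))
    (fun y => -β * y ^ (-β - 1)) (lt_add_one x)
    (fun y hy => (continuousAt_rpow_const y (-β)
      (Or.inl (hx.trans_le hy.1).ne')).continuousWithinAt)
    (fun y hy => by
      simpa [sub_eq_add_neg, neg_add] using
        hasDerivAt_rpow_const (x := y) (p := -β) (Or.inl (hx.trans hy.1).ne'))
  have hmono : (x + 1) ^ (-β - 1) ≤ c ^ (-β - 1) :=
    rpow_le_rpow_of_nonpos (hx.trans hxc) hc1.le (by linarith)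
  simp only [add_sub_cancel_left, div_one] at hslope
  nlinarith [mul_le_mul_of_nonneg_left hmono hβ.le]

lemma sq_sqrt_mul_rpow_sub_sqrt_mul_rpow_ge {α N x : ℝ} (hα : 0 < α) (hN : 0 ≤ N) (hx : 0 < x) :
    N * (α ^ 2 / 4) * (x + 1) ^ (-(α + 2)) ≤
      (√(N * x ^ (-α)) - √(N * (x + 1) ^ (-α))) ^ 2 := by
  have hsqrt : ∀ y : ℝ, 0 ≤ y → √(N * y ^ (-α)) = √N * y ^ (-(α / 2)) := fun y hy => by
    rw [sqrt_mul hN, sqrt_eq_rpow (y ^ _), ← rpow_mul hy]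
    ring_nf
  have hgap := mul_rpow_neg_sub_one_le_rpow_neg_sub (half_pos hα) hx
  have hsq : (α / 2 * (x + 1) ^ (-(α / 2) - 1)) ^ 2 = α ^ 2 / 4 * (x + 1) ^ (-(α + 2)) := by
    rw [mul_pow, ← rpow_mul_natCast (by positivity)]
    ring_nf
  rw [hsqrt x hx.le, hsqrt (x + 1) (by positivity), ← mul_sub, mul_pow, sq_sqrt hN, mul_assoc,
    ← hsq]
  gcongr

lemma inv_le_rpow_neg_of_le_rpow_one_div {y p R : ℝ} (hy : 0 < y) (hp : 0 < p) (hR : 0 < R)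
    (h : y ≤ R ^ (1 / p)) : R⁻¹ ≤ y ^ (-p) := by
  rw [one_div, le_rpow_inv_iff_of_pos hy.le hR.le hp] at h
  rw [rpow_neg hy.le]
  exact inv_anti₀ (by positivity) h

lemma measure_compl_setOf_forall_succ_lt_le_sum {Ω : Type*} [MeasurableSpace Ω] (μ : Measure Ω)
    (X : ℕ → Ω → ℕ) (n : ℕ) :
    μ {ω | ∀ i : ℕ, 1 ≤ i → i < n → X (i + 1) ω < X i ω}ᶜ ≤
      ∑ i ∈ Finset.Ico 1 n, μ {ω | X i ω ≤ X (i + 1) ω} := by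
  refine (measure_mono fun ω hω => ?_).trans (measure_biUnion_finset_le _ _)
  simp only [Set.mem_compl_iff, Set.mem_ofPred_eq, not_forall, not_lt] at hω
  obtain ⟨i, hi1, hin, hle⟩ := hω
  exact Set.mem_biUnion (Finset.mem_Ico.mpr ⟨hi1, hin⟩) hle

namespace IsZipfPoisson

variable {Ω : Type*} [MeasurableSpace Ω] {P : Measure Ω} {X : ℕ → Ω → ℕ} {α N : ℝ}

lemma measure_le_succ_le (h : IsZipfPoisson P X α N) (hα : 0 < α) (hN : 0 ≤ N) {i : ℕ}
    (hi : 1 ≤ i) :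
    P {ω | X i ω ≤ X (i + 1) ω} ≤
      ENNReal.ofReal (exp (-(N * (α ^ 2 / 4) * ((i : ℝ) + 1) ^ (-(α + 2))))) := by
  obtain ⟨hind, hpmf⟩ := h
  have hi0 : (0 : ℝ) < i := by exact_mod_cast hi
  have hpair : IndepFun (X i) (X (i + 1)) P :=
    hind.indepFun (i := ⟨i, hi⟩) (j := ⟨i + 1, hi.trans i.le_succ⟩) (by simp)
  have hmono : N * ((i : ℝ) + 1) ^ (-α) ≤ N * (i : ℝ) ^ (-α) := by
    exact mul_le_mul_of_nonneg_left
      (rpow_le_rpow_of_nonpos hi0 (by linarith) (by linarith)) hN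
  refine (measure_setOf_le_le_exp_of_poisson (by positivity) hmono hpair (hpmf i hi)
    (by exact_mod_cast hpmf (i + 1) (by omega))).trans ?_
  gcongr
  exact sq_sqrt_mul_rpow_sub_sqrt_mul_rpow_ge hα hN hi0

lemma measure_compl_setOf_forall_succ_lt_le (h : IsZipfPoisson P X α N) (hα : 0 < α)
    (hN : 1 < N) {n : ℕ}
    (hn : (n : ℝ) ≤ (α ^ 2 * (α + 2) / 4 * N / log N) ^ ((1 : ℝ) / (α + 2))) :
    P {ω | ∀ i : ℕ, 1 ≤ i → i < n → X (i + 1) ω < X i ω}ᶜ ≤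
      ENNReal.ofReal ((α ^ 2 * (α + 2) / 4 / log N) ^ ((1 : ℝ) / (α + 2))) := by
  set c : ℝ := 1 / (α + 2)
  set R : ℝ := α ^ 2 * (α + 2) / 4 * N / log N
  have hlog : 0 < log N := log_pos hN
  have hN0 : 0 < N := by linarith
  have hR : 0 < R := by positivity
  have hpair : ∀ i ∈ Finset.Ico 1 n,
      P {ω | X i ω ≤ X (i + 1) ω} ≤ ENNReal.ofReal (N ^ (-c)) := by
    intro i hi
    obtain ⟨hi1, hin⟩ := Finset.mem_Ico.mp hi
    refine (h.measure_le_succ_le hα hN0.le hi1).trans (ENNReal.ofReal_le_ofReal ?_)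
    have hinv : R⁻¹ ≤ ((i : ℝ) + 1) ^ (-(α + 2)) :=
      inv_le_rpow_neg_of_le_rpow_one_div (by positivity) (by positivity) hR
        ((by exact_mod_cast hin : (i : ℝ) + 1 ≤ n).trans hn)
    rw [rpow_def_of_pos hN0, exp_le_exp]
    calc -(N * (α ^ 2 / 4) * ((i : ℝ) + 1) ^ (-(α + 2))) ≤ -(N * (α ^ 2 / 4) * R⁻¹) := by
          gcongr
      _ = log N * -c := by simp only [c, R]; field_simp
  calc P {ω | ∀ i : ℕ, 1 ≤ i → i < n → X (i + 1) ω < X i ω}ᶜ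
      ≤ ∑ i ∈ Finset.Ico 1 n, P {ω | X i ω ≤ X (i + 1) ω} :=
        measure_compl_setOf_forall_succ_lt_le_sum P X n
    _ ≤ ∑ _i ∈ Finset.Ico 1 n, ENNReal.ofReal (N ^ (-c)) := Finset.sum_le_sum hpair
    _ ≤ ENNReal.ofReal (n * N ^ (-c)) := by
        rw [Finset.sum_const, Nat.card_Ico, nsmul_eq_mul, ← ENNReal.ofReal_natCast,
          ← ENNReal.ofReal_mul (by positivity)]
        gcongr
        exact_mod_cast n.sub_le 1
    _ ≤ ENNReal.ofReal (R ^ c * N ^ (-c)) := by gcongr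
    _ = ENNReal.ofReal ((α ^ 2 * (α + 2) / 4 / log N) ^ c) := by
        rw [show R = α ^ 2 * (α + 2) / 4 / log N * N by ring, mul_rpow (by positivity) hN0.le,
          mul_assoc, ← rpow_add hN0, add_neg_cancel, rpow_zero, mul_one]

end IsZipfPoisson

lemma tendsto_measure_one_of_tendsto_measure_compl {ι Ω : Type*} [MeasurableSpace Ω]
    {l : Filter ι} {μ : ι → Measure Ω} [∀ i, IsProbabilityMeasure (μ i)] {s : ι → Set Ω}
    (h : Tendsto (fun i => μ i (s i)ᶜ) l (nhds 0)) :
    Tendsto (fun i => μ i (s i)) l (nhds 1) := by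
  have hsub : Tendsto (fun i => 1 - μ i (s i)ᶜ) l (nhds 1) := by
    simpa [Function.comp_def] using
      ((ENNReal.continuous_sub_left ENNReal.one_ne_top).tendsto 0).comp h
  refine tendsto_of_tendsto_of_tendsto_of_le_of_le hsub tendsto_const_nhds (fun i => ?_)
    (fun i => prob_le_one)
  rw [tsub_le_iff_right, ← measure_univ (μ := μ i)]
  exact measure_univ_le_add_compl (s i)

theorem zipf_poisson_order_tendsto_one_general
    {Ω : Type*} [MeasurableSpace Ω] (P : ℝ → Measure Ω)
    [∀ N, IsProbabilityMeasure (P N)]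
    (X : ℕ → Ω → ℕ) (α : ℝ) (hα : 1 < α)
    (hzp : ∀ N : ℝ, 0 < N → IsZipfPoisson (P N) X α N)
    (n : ℝ → ℕ)
    (hn : ∀ᶠ N : ℝ in atTop,
      (n N : ℝ) ≤ (α ^ 2 * (α + 2) / 4 * N / Real.log N) ^ ((1 : ℝ) / (α + 2))) :
    Tendsto
      (fun N : ℝ => P N {ω | ∀ i : ℕ, 1 ≤ i → i < n N → X (i + 1) ω < X i ω})
      atTop (nhds 1) := by
  have hα0 : 0 < α := by linarith
  have hbound : ∀ᶠ N : ℝ in atTop,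
      P N {ω | ∀ i : ℕ, 1 ≤ i → i < n N → X (i + 1) ω < X i ω}ᶜ ≤
        ENNReal.ofReal ((α ^ 2 * (α + 2) / 4 / log N) ^ ((1 : ℝ) / (α + 2))) := by
    filter_upwards [hn, eventually_gt_atTop 1] with N hnN hN
    exact (hzp N (by linarith)).measure_compl_setOf_forall_succ_lt_le hα0 hN hnN
  have hc : 0 < (1 : ℝ) / (α + 2) := by positivity
  have hdecay : Tendsto (fun N : ℝ => (α ^ 2 * (α + 2) / 4 / log N) ^ ((1 : ℝ) / (α + 2)))
      atTop (nhds 0) := by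
    have h := ((continuousAt_rpow_const 0 _ (Or.inr hc.le)).tendsto).comp
      ((tendsto_const_nhds (x := α ^ 2 * (α + 2) / 4)).div_atTop tendsto_log_atTop)
    rwa [zero_rpow hc.ne'] at h
  refine tendsto_measure_one_of_tendsto_measure_compl
    (tendsto_of_tendsto_of_tendsto_of_le_of_le' tendsto_const_nhds ?_
      (Eventually.of_forall fun _ => zero_le) hbound)
  simpa using ENNReal.tendsto_ofReal hdecay

/-- If `n(N) ≥ 2` and `n(N) ≤ (A N / log N)^(1/(α+2))` for large `N`, where
`A = α²(α+2)/4`, then `Pr(X₁ > X₂ > … > X_{n(N)}) → 1` as `N → ∞` in the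
Zipf–Poisson ensemble with parameter `N`. -/
theorem zipf_poisson_order_tendsto_one
    {Ω : Type*} [MeasurableSpace Ω] (P : ℝ → Measure Ω)
    [∀ N, IsProbabilityMeasure (P N)]
    (X : ℕ → Ω → ℕ) (α : ℝ) (hα : 1 < α)
    (hzp : ∀ N : ℝ, 0 < N → IsZipfPoisson (P N) X α N)
    (n : ℝ → ℕ) (hn2 : ∀ N, 2 ≤ n N)
    (hn : ∀ᶠ N : ℝ in atTop,
      (n N : ℝ) ≤ (α ^ 2 * (α + 2) / 4 * N / Real.log N) ^ ((1 : ℝ) / (α + 2))) :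
    Tendsto
      (fun N : ℝ => P N {ω | ∀ i : ℕ, 1 ≤ i → i < n N → X (i + 1) ω < X i ω})
      atTop (nhds 1) :=
  zipf_poisson_order_tendsto_one_general P X α hα hzp n hn
end

section
/- Let X_i, i ≥ 1, be independent random variables with X_i ~ Poisson(N (i+k)^{−α}) for parameters α > 1, N > 0 and k ≥ 0 (the Zipf–Mandelbrot–Poisson ensemble). Then for every integer n ≥ 2, the probability that the first n ranks are not in strictly decreasing order satisfies 1 − Pr(X_1 > X_2 > … > X_n) ≤ Σ_{i=1}^{n−1} exp(−N ((i+k)^{−α/2} − (i+k+1)^{−α/2})²). -/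
open MeasureTheory ProbabilityTheory

/-!
A union bound over the adjacent pairs reduces the claim to `P(X i ≤ X (i+1))`, a comparison of
independent Poisson variables with rates `r ≥ s`. For `a ≤ b` one has `r^a s^b ≤ √(rs)^(a+b)`, so
the joint pmf summed over `a ≤ b` is at most `e^(-r-s) (∑ √(rs)^a/a!)^2 = e^(-(√r-√s)^2)`. For the
ensemble, `√(N (i+k)^(-α)) = √N (i+k)^(-α/2)`.
-/

/-- The Zipf–Mandelbrot–Poisson ensemble with parameters `α > 1`, `N > 0` and shift
`k ≥ 0`: the random variables `X i`, for integers `i ≥ 1`, are independent and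
`X i ~ Poisson(N * (i + k)^(-α))`. -/
def IsZipfMandelbrotPoisson {Ω : Type*} [MeasurableSpace Ω] (P : Measure Ω)
    (X : ℕ → Ω → ℕ) (α N k : ℝ) : Prop :=
  iIndepFun (fun i : {i : ℕ // 1 ≤ i} => X i) P ∧
  ∀ i : ℕ, 1 ≤ i → ∀ j : ℕ,
    P {ω | X i ω = j} =
      ENNReal.ofReal (Real.exp (-(N * ((i : ℝ) + k) ^ (-α))) *
        (N * ((i : ℝ) + k) ^ (-α)) ^ j / (Nat.factorial j))

open scoped ENNReal Nat

lemma pow_mul_pow_le_sqrt_mul_pow_add {r s : ℝ} (hs : 0 ≤ s) (hsr : s ≤ r) {a b : ℕ}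
    (hab : a ≤ b) : r ^ a * s ^ b ≤ √(r * s) ^ (a + b) := by
  have hrs : 0 ≤ r * s := mul_nonneg (hs.trans hsr) hs
  have hs_le : s ≤ √(r * s) := (Real.le_sqrt hs hrs).2 (by nlinarith)
  obtain ⟨d, rfl⟩ := Nat.exists_eq_add_of_le hab
  calc r ^ a * s ^ (a + d) = (r * s) ^ a * s ^ d := by ring
    _ ≤ (√(r * s) ^ 2) ^ a * √(r * s) ^ d := by
        rw [Real.sq_sqrt hrs]; gcongr
    _ = √(r * s) ^ (a + (a + d)) := by ring

lemma tsum_ofReal_mul_pow_div_factorial {t : ℝ} (ht : 0 ≤ t) {c : ℝ} (hc : 0 ≤ c) :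
    ∑' a : ℕ, ENNReal.ofReal (t * c ^ a / a !) = ENNReal.ofReal (t * Real.exp c) := by
  have hsum : HasSum (fun a : ℕ => t * c ^ a / a !) (t * Real.exp c) := by
    simpa only [mul_div_assoc, Real.exp_eq_exp_ℝ]
      using (NormedSpace.expSeries_div_hasSum_exp c).mul_left t
  rw [← ENNReal.ofReal_tsum_of_nonneg (fun a => by positivity) hsum.summable, hsum.tsum_eq]

namespace ProbabilityTheory

variable {Ω : Type*} [MeasurableSpace Ω] {P : Measure Ω}

lemma IndepFun.measure_le_le_tsum_mul_tsum {X Y : Ω → ℕ} (hXY : IndepFun X Y P)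
    {f g : ℕ → ℝ≥0∞}
    (hfg : ∀ a b, a ≤ b → P {ω | X ω = a} * P {ω | Y ω = b} ≤ f a * g b) :
    P {ω | X ω ≤ Y ω} ≤ (∑' a, f a) * ∑' b, g b := by
  let E : {p : ℕ × ℕ // p.1 ≤ p.2} → Set Ω := fun p => {ω | X ω = p.1.1} ∩ {ω | Y ω = p.1.2}
  have hcover : {ω | X ω ≤ Y ω} ⊆ ⋃ p, E p := fun ω hω =>
    Set.mem_iUnion.2 ⟨⟨(X ω, Y ω), hω⟩, rfl, rfl⟩
  have hE : ∀ p, P (E p) = P {ω | X ω = p.1.1} * P {ω | Y ω = p.1.2} := fun p =>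
    hXY.measure_inter_preimage_eq_mul _ _ (measurableSet_singleton _) (measurableSet_singleton _)
  calc P {ω | X ω ≤ Y ω} ≤ ∑' p, P (E p) := (measure_mono hcover).trans (measure_iUnion_le _)
    _ ≤ ∑' p : {p : ℕ × ℕ // p.1 ≤ p.2}, f p.1.1 * g p.1.2 :=
        ENNReal.tsum_le_tsum fun p => (hE p).trans_le (hfg _ _ p.2)
    _ ≤ ∑' p : ℕ × ℕ, f p.1 * g p.2 :=
        ENNReal.tsum_comp_le_tsum_of_injective Subtype.val_injective fun p : ℕ × ℕ => f p.1 * g p.2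
    _ = (∑' a, f a) * ∑' b, g b := by
        rw [ENNReal.tsum_prod', ← ENNReal.tsum_mul_right]
        simp only [ENNReal.tsum_mul_left]

lemma IndepFun.measure_le_le_exp_neg_sq_sqrt_sub_sqrt {X Y : Ω → ℕ} (hXY : IndepFun X Y P)
    {r s : ℝ} (hs : 0 ≤ s) (hsr : s ≤ r)
    (hX : ∀ j : ℕ, P {ω | X ω = j} = ENNReal.ofReal (Real.exp (-r) * r ^ j / j !))
    (hY : ∀ j : ℕ, P {ω | Y ω = j} = ENNReal.ofReal (Real.exp (-s) * s ^ j / j !)) :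
    P {ω | X ω ≤ Y ω} ≤ ENNReal.ofReal (Real.exp (-(√r - √s) ^ 2)) := by
  have hr : 0 ≤ r := hs.trans hsr
  set c := √(r * s)
  have hc : 0 ≤ c := Real.sqrt_nonneg _
  have hterm : ∀ a b, a ≤ b → P {ω | X ω = a} * P {ω | Y ω = b} ≤
      ENNReal.ofReal (Real.exp (-r) * c ^ a / a !) *
        ENNReal.ofReal (Real.exp (-s) * c ^ b / b !) := by
    intro a b hab
    rw [hX, hY, ← ENNReal.ofReal_mul (by positivity), ← ENNReal.ofReal_mul (by positivity)]
    refine ENNReal.ofReal_le_ofReal ?_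
    calc Real.exp (-r) * r ^ a / a ! * (Real.exp (-s) * s ^ b / b !)
        = Real.exp (-r) * Real.exp (-s) / (a ! * b !) * (r ^ a * s ^ b) := by ring
      _ ≤ Real.exp (-r) * Real.exp (-s) / (a ! * b !) * c ^ (a + b) := by
          gcongr; exact pow_mul_pow_le_sqrt_mul_pow_add hs hsr hab
      _ = Real.exp (-r) * c ^ a / a ! * (Real.exp (-s) * c ^ b / b !) := by ring
  refine (hXY.measure_le_le_tsum_mul_tsum hterm).trans_eq ?_
  rw [tsum_ofReal_mul_pow_div_factorial (Real.exp_nonneg _) hc,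
    tsum_ofReal_mul_pow_div_factorial (Real.exp_nonneg _) hc,
    ← ENNReal.ofReal_mul (by positivity), ← Real.exp_add, ← Real.exp_add, ← Real.exp_add]
  have hc_eq : c = √r * √s := Real.sqrt_mul hr s
  congr 2
  nlinarith [Real.sq_sqrt hr, Real.sq_sqrt hs]

lemma one_sub_measure_forall_lt_le_sum [IsProbabilityMeasure P] (X : ℕ → Ω → ℕ) (n : ℕ) :
    1 - P {ω | ∀ i : ℕ, 1 ≤ i → i < n → X (i + 1) ω < X i ω} ≤
      ∑ i ∈ Finset.Ico 1 n, P {ω | X i ω ≤ X (i + 1) ω} := by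
  set A := {ω | ∀ i : ℕ, 1 ≤ i → i < n → X (i + 1) ω < X i ω}
  have hcompl : 1 - P A ≤ P Aᶜ := by
    rw [tsub_le_iff_right, ← measure_univ (μ := P), ← Set.compl_union_self A]
    exact measure_union_le _ _
  have hcover : Aᶜ ⊆ ⋃ i ∈ Finset.Ico 1 n, {ω | X i ω ≤ X (i + 1) ω} := by
    intro ω hω
    simp only [A, Set.mem_compl_iff, Set.mem_ofPred_eq, not_forall, not_lt] at hω
    obtain ⟨i, hi1, hin, hle⟩ := hω
    exact Set.mem_biUnion (Finset.mem_Ico.2 ⟨hi1, hin⟩) hle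
  exact hcompl.trans ((measure_mono hcover).trans (measure_biUnion_finset_le _ _))

end ProbabilityTheory

lemma Real.sqrt_mul_rpow_neg {N x : ℝ} (hN : 0 ≤ N) (hx : 0 ≤ x) (α : ℝ) :
    √(N * x ^ (-α)) = √N * x ^ (-α / 2) := by
  rw [Real.sqrt_mul hN, Real.sqrt_eq_rpow (x ^ (-α)), ← Real.rpow_mul hx]
  ring_nf

lemma IsZipfMandelbrotPoisson.measure_le_succ_le {Ω : Type*} [MeasurableSpace Ω]
    {P : Measure Ω} {X : ℕ → Ω → ℕ} {α N k : ℝ} (hzp : IsZipfMandelbrotPoisson P X α N k)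
    (hα : 0 ≤ α) (hN : 0 ≤ N) (hk : 0 ≤ k) {i : ℕ} (hi : 1 ≤ i) :
    P {ω | X i ω ≤ X (i + 1) ω} ≤
      ENNReal.ofReal
        (Real.exp (-N * (((i : ℝ) + k) ^ (-α / 2) - ((i : ℝ) + k + 1) ^ (-α / 2)) ^ 2)) := by
  set x : ℝ := i + k
  have hx : 0 < x := by positivity
  have hindep : IndepFun (X i) (X (i + 1)) P :=
    hzp.1.indepFun (i := ⟨i, hi⟩) (j := ⟨i + 1, by omega⟩) (by simp)
  have hrate : N * (x + 1) ^ (-α) ≤ N * x ^ (-α) :=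
    mul_le_mul_of_nonneg_left (Real.rpow_le_rpow_of_nonpos hx (by linarith) (by linarith)) hN
  have hX_succ : ∀ j : ℕ, P {ω | X (i + 1) ω = j} = ENNReal.ofReal
      (Real.exp (-(N * (x + 1) ^ (-α))) * (N * (x + 1) ^ (-α)) ^ j / j !) := by
    have hcast : ((i + 1 : ℕ) : ℝ) + k = x + 1 := by push_cast; ring
    intro j
    rw [hzp.2 (i + 1) (by omega) j, hcast]
  refine (hindep.measure_le_le_exp_neg_sq_sqrt_sub_sqrt (by positivity) hrate
    (hzp.2 i hi) hX_succ).trans_eq ?_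
  rw [Real.sqrt_mul_rpow_neg hN hx.le, Real.sqrt_mul_rpow_neg hN (by positivity), ← mul_sub,
    mul_pow, Real.sq_sqrt hN, neg_mul]

theorem zipf_mandelbrot_poisson_order_bound_general
    {Ω : Type*} [MeasurableSpace Ω] (P : Measure Ω) [IsProbabilityMeasure P]
    (X : ℕ → Ω → ℕ) (α N k : ℝ) (hα : 1 < α) (hN : 0 < N) (hk : 0 ≤ k)
    (hzp : IsZipfMandelbrotPoisson P X α N k) (n : ℕ) :
    1 - P {ω | ∀ i : ℕ, 1 ≤ i → i < n → X (i + 1) ω < X i ω} ≤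
      ENNReal.ofReal
        (∑ i ∈ Finset.Ico 1 n,
          Real.exp (-N * (((i : ℝ) + k) ^ (-α / 2) - ((i : ℝ) + k + 1) ^ (-α / 2)) ^ 2)) := by
  rw [ENNReal.ofReal_sum_of_nonneg fun i _ => (Real.exp_pos _).le]
  refine (one_sub_measure_forall_lt_le_sum X n).trans (Finset.sum_le_sum fun i hi => ?_)
  exact hzp.measure_le_succ_le (by linarith) hN.le hk (Finset.mem_Ico.1 hi).1

/-- For the Zipf–Mandelbrot–Poisson ensemble with `α > 1`, `N > 0`, `k ≥ 0` and any
integer `n ≥ 2`, the probability that the first `n` ranks are not in strictly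
decreasing order is at most
`∑_{i=1}^{n-1} exp(-N ((i+k)^(-α/2) - (i+k+1)^(-α/2))²)`. -/
theorem zipf_mandelbrot_poisson_order_bound
    {Ω : Type*} [MeasurableSpace Ω] (P : Measure Ω) [IsProbabilityMeasure P]
    (X : ℕ → Ω → ℕ) (α N k : ℝ) (hα : 1 < α) (hN : 0 < N) (hk : 0 ≤ k)
    (hzp : IsZipfMandelbrotPoisson P X α N k) (n : ℕ) (hn : 2 ≤ n) :
    1 - P {ω | ∀ i : ℕ, 1 ≤ i → i < n → X (i + 1) ω < X i ω} ≤
      ENNReal.ofReal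
        (∑ i ∈ Finset.Ico 1 n,
          Real.exp (-N * (((i : ℝ) + k) ^ (-α / 2) - ((i : ℝ) + k + 1) ^ (-α / 2)) ^ 2)) :=
  zipf_mandelbrot_poisson_order_bound_general P X α N k hα hN hk hzp n
end
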